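/- In the product construction s(v) = s̃(v ∩ B) ∪ s_{v∩B}(v ∩ B̄), if s̃ and all the s_u are acyclic USOs, then s is an acyclic USO. -/
import Mathlib


open Finset

private lemma symmDiff_inter_distrib' {n : ℕ} (v u C : Finset (Fin n)) :
    symmDiff v u ∩ C = symmDiff (v ∩ C) (u ∩ C) := by
  ext a; simp [Finset.mem_symmDiff, Finset.mem_inter]; tauto

private lemma split_subset' {n : ℕ} {A B v : Finset (Fin n)} (hBA : B ⊆ A) (hv : v ⊆ A) :
    v = v ∩ B ∪ v ∩ (A \ B) := by
  ext a
  simp only [Finset.mem_union, Finset.mem_inter, Finset.mem_sdiff]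
  constructor
  · intro ha
    by_cases hb : a ∈ B
    · exact Or.inl ⟨ha, hb⟩
    · exact Or.inr ⟨ha, hv ha, hb⟩
  · rintro (⟨ha, _⟩ | ⟨ha, _⟩) <;> exact ha


/-- A directed step in the orientation given by outmap `s`:
from `v` along an outgoing coordinate `j`. -/
def USO.Step {n : ℕ} (s : Finset (Fin n) → Finset (Fin n))
    (v u : Finset (Fin n)) : Prop :=
  ∃ j, j ∈ s v ∧ u = symmDiff v {j}

/-- Reachability along directed paths. -/
def USO.Reach {n : ℕ} (s : Finset (Fin n) → Finset (Fin n)) :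
    Finset (Fin n) → Finset (Fin n) → Prop :=
  Relation.ReflTransGen (USO.Step s)

/-- Existence of a directed path of length exactly `k`. -/
def USO.StepN {n : ℕ} (s : Finset (Fin n) → Finset (Fin n)) :
    ℕ → Finset (Fin n) → Finset (Fin n) → Prop
  | 0, v, u => v = u
  | k + 1, v, u => ∃ w, USO.Step s v w ∧ USO.StepN s k w u

/-- `s` is (the outmap of) a unique sink orientation of the `n`-cube:
every face `F_{J,v} = {u : v ∆ u ⊆ J}` has a unique sink. -/
def IsUSO {n : ℕ} (s : Finset (Fin n) → Finset (Fin n)) : Prop :=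
  ∀ J v : Finset (Fin n), ∃! u, symmDiff v u ⊆ J ∧ s u ∩ J = ∅

/-- The reachmap of `v`: all coordinates outgoing at some vertex reachable from `v`. -/
def reachmap {n : ℕ} (s : Finset (Fin n) → Finset (Fin n))
    (v : Finset (Fin n)) : Set (Fin n) :=
  {j | ∃ u, USO.Reach s v u ∧ j ∈ s u}

/-- `s` is `i`-nice: every non-sink vertex has a directed path of length at most `i`
to a vertex of strictly smaller reachmap. -/
def IsNice {n : ℕ} (i : ℕ) (s : Finset (Fin n) → Finset (Fin n)) : Prop :=
  ∀ v, s v ≠ ∅ → ∃ u, (∃ k ≤ i, USO.StepN s k v u) ∧ reachmap s u ⊂ reachmap s v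

/-- Acyclicity of the orientation. -/
def IsAcyclic {n : ℕ} (s : Finset (Fin n) → Finset (Fin n)) : Prop :=
  ∀ v u, USO.Reach s v u → USO.Reach s u v → v = u

/-- `s` is a USO on the subcube `2^C`: outmaps of vertices of the subcube lie in `C`,
and every nonempty face of the subcube has a unique sink. -/
def IsUSOOn {n : ℕ} (C : Finset (Fin n)) (s : Finset (Fin n) → Finset (Fin n)) : Prop :=
  (∀ v, v ⊆ C → s v ⊆ C) ∧
  ∀ J v : Finset (Fin n), J ⊆ C → v ⊆ C →
    ∃! u, u ⊆ C ∧ symmDiff v u ⊆ J ∧ s u ∩ J = ∅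

/-- Acyclicity of an orientation on the subcube 2^C. -/
def IsAcyclicOn {n : ℕ} (C : Finset (Fin n))
    (s : Finset (Fin n) → Finset (Fin n)) : Prop :=
  ∀ v u, v ⊆ C → USO.Reach s v u → USO.Reach s u v → v = u

/-- the product of acyclic USOs is an acyclic USO. -/
theorem product_acyclic {n : ℕ} (A B : Finset (Fin n)) (hBA : B ⊆ A)
    (st : Finset (Fin n) → Finset (Fin n))
    (hst : IsUSOOn B st) (hstac : IsAcyclicOn B st)
    (su : Finset (Fin n) → Finset (Fin n) → Finset (Fin n))
    (hsu : ∀ u, u ⊆ B → IsUSOOn (A \ B) (su u))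
    (hsuac : ∀ u, u ⊆ B → IsAcyclicOn (A \ B) (su u)) :
    IsUSOOn A (fun v => st (v ∩ B) ∪ su (v ∩ B) (v ∩ (A \ B))) ∧
      IsAcyclicOn A (fun v => st (v ∩ B) ∪ su (v ∩ B) (v ∩ (A \ B))) := by
  classical
  set s : Finset (Fin n) → Finset (Fin n) :=
    fun v => st (v ∩ B) ∪ su (v ∩ B) (v ∩ (A \ B)) with hs
  have hstB : ∀ v : Finset (Fin n), st (v ∩ B) ⊆ B := fun v => hst.1 _ inter_subset_right
  have hsuAB : ∀ v : Finset (Fin n), su (v ∩ B) (v ∩ (A \ B)) ⊆ A \ B :=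
    fun v => (hsu _ inter_subset_right).1 _ inter_subset_right
  have hsA : ∀ v, s v ⊆ A :=
    fun v => union_subset ((hstB v).trans hBA) ((hsuAB v).trans sdiff_subset)
  -- classification of steps
  have hstep : ∀ v u, USO.Step s v u →
      (USO.Step st (v ∩ B) (u ∩ B) ∧ v ∩ (A \ B) = u ∩ (A \ B)) ∨
      (v ∩ B = u ∩ B ∧ USO.Step (su (v ∩ B)) (v ∩ (A \ B)) (u ∩ (A \ B))) := by
    rintro v u ⟨j, hj, rfl⟩
    rcases Finset.mem_union.1 hj with hj' | hj'
    · left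
      have hjB : j ∈ B := hstB v hj'
      have hjAB : j ∉ A \ B := by simp [hjB]
      constructor
      · refine ⟨j, hj', ?_⟩
        rw [symmDiff_inter_distrib', Finset.singleton_inter_of_mem hjB]
      · rw [symmDiff_inter_distrib', Finset.singleton_inter_of_notMem hjAB,
          ← Finset.bot_eq_empty, symmDiff_bot]
    · right
      have hjAB : j ∈ A \ B := hsuAB v hj'
      have hjB : j ∉ B := (Finset.mem_sdiff.1 hjAB).2
      constructor
      · rw [symmDiff_inter_distrib', Finset.singleton_inter_of_notMem hjB,
          ← Finset.bot_eq_empty, symmDiff_bot]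
      · refine ⟨j, hj', ?_⟩
        rw [symmDiff_inter_distrib', Finset.singleton_inter_of_mem hjAB]
  have hstepA : ∀ v u, v ⊆ A → USO.Step s v u → u ⊆ A := by
    rintro v u hv ⟨j, hj, rfl⟩
    exact le_trans symmDiff_le_sup
      (union_subset hv (Finset.singleton_subset_iff.2 (hsA v hj)))
  have hreachA : ∀ v u, v ⊆ A → USO.Reach s v u → u ⊆ A := by
    intro v u hv h
    induction h with
    | refl => exact hv
    | tail _ hstp ih => exact hstepA _ _ ih hstp
  -- projection of reach to B
  have hreachB : ∀ v u, USO.Reach s v u → USO.Reach st (v ∩ B) (u ∩ B) := by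
    intro v u h
    induction h with
    | refl => exact Relation.ReflTransGen.refl
    | @tail b c _ hstp ih =>
      rcases hstep _ _ hstp with ⟨h1, _⟩ | ⟨h1, _⟩
      · exact ih.tail h1
      · exact h1 ▸ ih
  -- key lemma: along a cycle, B-part is constant and fiber part moves in one fiber
  have hkey : ∀ v u, USO.Reach s v u → USO.Reach s u v →
      v ∩ B = u ∩ B ∧
        Relation.ReflTransGen (USO.Step (su (v ∩ B))) (v ∩ (A \ B)) (u ∩ (A \ B)) := by
    intro v u h
    induction h with
    | refl => exact fun _ => ⟨rfl, Relation.ReflTransGen.refl⟩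
    | @tail b c _ hstp ih =>
      intro hcv
      have hbv : USO.Reach s b v := Relation.ReflTransGen.head hstp hcv
      obtain ⟨hB, hF⟩ := ih hbv
      rcases hstep _ _ hstp with ⟨h1, _⟩ | ⟨h1, h2⟩
      · exfalso
        have hcb : USO.Reach st (c ∩ B) (b ∩ B) := by
          have h3 := hreachB _ _ hcv
          rw [hB] at h3
          exact h3
        have heq : b ∩ B = c ∩ B :=
          hstac _ _ inter_subset_right (Relation.ReflTransGen.single h1) hcb
        obtain ⟨j, _, he⟩ := h1
        rw [← heq] at he
        have : ({j} : Finset (Fin n)) = ⊥ := symmDiff_eq_left.mp he.symm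
        simpa using this
      · refine ⟨hB.trans h1, hF.tail ?_⟩
        rwa [hB]
  -- Acyclicity
  have hac : IsAcyclicOn A s := by
    intro v u hv hvu huv
    have hu : u ⊆ A := hreachA _ _ hv hvu
    obtain ⟨hB1, hF1⟩ := hkey v u hvu huv
    obtain ⟨_, hF2⟩ := hkey u v huv hvu
    rw [← hB1] at hF2
    have hFeq : v ∩ (A \ B) = u ∩ (A \ B) :=
      hsuac (v ∩ B) inter_subset_right _ _ inter_subset_right hF1 hF2
    rw [split_subset' hBA hv, split_subset' hBA hu, hB1, hFeq]
  refine ⟨⟨fun v _ => hsA v, ?_⟩, hac⟩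
  intro J v hJ hv
  obtain ⟨w, ⟨hwB, hwsd, hwsink⟩, hwuniq⟩ :=
    hst.2 (J ∩ B) (v ∩ B) inter_subset_right inter_subset_right
  obtain ⟨x, ⟨hxAB, hxsd, hxsink⟩, hxuniq⟩ :=
    (hsu w hwB).2 (J ∩ (A \ B)) (v ∩ (A \ B)) inter_subset_right inter_subset_right
  have hdisj : Disjoint x B := (Finset.sdiff_disjoint).mono_left hxAB
  have hdisj' : Disjoint w (A \ B) := (Finset.sdiff_disjoint).symm.mono_left hwB
  have h1 : (w ∪ x) ∩ B = w := by
    rw [Finset.union_inter_distrib_right, Finset.inter_eq_left.mpr hwB,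
      Finset.disjoint_iff_inter_eq_empty.mp hdisj, Finset.union_empty]
  have h2 : (w ∪ x) ∩ (A \ B) = x := by
    rw [Finset.union_inter_distrib_right, Finset.inter_eq_left.mpr hxAB,
      Finset.disjoint_iff_inter_eq_empty.mp hdisj', Finset.empty_union]
  have hwxA : w ∪ x ⊆ A := union_subset (hwB.trans hBA) (hxAB.trans sdiff_subset)
  refine ⟨w ∪ x, ⟨hwxA, ?_, ?_⟩, ?_⟩
  · -- symmDiff v (w ∪ x) ⊆ J
    have hDA : symmDiff v (w ∪ x) ⊆ A :=
      le_trans symmDiff_le_sup (union_subset hv hwxA)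
    rw [split_subset' hBA hDA]
    apply union_subset
    · rw [symmDiff_inter_distrib', h1]
      exact hwsd.trans inter_subset_left
    · rw [symmDiff_inter_distrib', h2]
      exact hxsd.trans inter_subset_left
  · -- sink
    show (st ((w ∪ x) ∩ B) ∪ su ((w ∪ x) ∩ B) ((w ∪ x) ∩ (A \ B))) ∩ J = ∅
    rw [h1, h2, Finset.union_inter_distrib_right]
    have e1 : st w ∩ J = ∅ := by
      rw [Finset.eq_empty_iff_forall_notMem]
      intro a ha
      rw [Finset.mem_inter] at ha
      have : a ∈ st w ∩ (J ∩ B) :=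
        Finset.mem_inter.2 ⟨ha.1, Finset.mem_inter.2 ⟨ha.2, hst.1 _ hwB ha.1⟩⟩
      rw [hwsink] at this
      exact absurd this (Finset.notMem_empty a)
    have e2 : su w x ∩ J = ∅ := by
      rw [Finset.eq_empty_iff_forall_notMem]
      intro a ha
      rw [Finset.mem_inter] at ha
      have : a ∈ su w x ∩ (J ∩ (A \ B)) :=
        Finset.mem_inter.2 ⟨ha.1, Finset.mem_inter.2 ⟨ha.2, (hsu w hwB).1 _ hxAB ha.1⟩⟩
      rw [hxsink] at this
      exact absurd this (Finset.notMem_empty a)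
    rw [e1, e2, Finset.union_empty]
  · -- uniqueness
    rintro u' ⟨hu'A, hu'sd, hu'sink⟩
    have hsubJ : ∀ T : Finset (Fin n), T ⊆ s u' → ∀ K ⊆ J, T ∩ K = ∅ := by
      intro T hT K hK
      rw [Finset.eq_empty_iff_forall_notMem]
      intro a ha
      rw [Finset.mem_inter] at ha
      have : a ∈ s u' ∩ J := Finset.mem_inter.2 ⟨hT ha.1, hK ha.2⟩
      rw [hu'sink] at this
      exact absurd this (Finset.notMem_empty a)
    have e1 : u' ∩ B = w := by
      apply hwuniq
      refine ⟨inter_subset_right, ?_, ?_⟩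
      · rw [← symmDiff_inter_distrib']
        exact fun a ha => Finset.mem_inter.2
          ⟨hu'sd (Finset.mem_inter.1 ha).1, (Finset.mem_inter.1 ha).2⟩
      · exact hsubJ _ Finset.subset_union_left _ inter_subset_left
    have e2 : u' ∩ (A \ B) = x := by
      apply hxuniq
      refine ⟨inter_subset_right, ?_, ?_⟩
      · rw [← symmDiff_inter_distrib']
        exact fun a ha => Finset.mem_inter.2
          ⟨hu'sd (Finset.mem_inter.1 ha).1, (Finset.mem_inter.1 ha).2⟩
      · rw [← e1]
        exact hsubJ _ Finset.subset_union_right _ inter_subset_left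
    rw [split_subset' hBA hu'A, e1, e2]
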